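/- arXiv:1404.6635 — 3 statements merged into one kernel-verified Lean document; each statement's English description precedes it below -/
import Mathlib

section
/- Let P be symmetric positive definite with block decomposition indexed by a partition Π = {π₁,…,π_m}, let x_opt = P⁻¹q, and for a block π let the BCD update be x' = x + 𝕀_πᵀ (P_{ππ})⁻¹ (q_π - P_π x), where P_π denotes the rows of P indexed by π, 𝕀_π the corresponding rows of the identity, and P_{ππ} = P_π 𝕀_πᵀ. Then ‖x' - x_opt‖_P² = ‖x - x_opt‖_P² - β_π(x), where β_π(x) = (P_π x - q_π)ᵀ (P_{ππ})⁻¹ (P_π x - q_π). -/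
/-!
Write `e = x - x_opt`. Since `P x_opt = q`, the block gradient is `g = P_π x - q_π = 𝕀_π P e`, and
`x' - x_opt = e - u` with `u = 𝕀_πᵀ P_{ππ}⁻¹ g`, the `P`-orthogonal projection of `e` onto the
coordinate subspace of `π` (here `P_{ππ} = 𝕀_π P 𝕀_πᵀ` is invertible, being a principal submatrix
of a positive definite matrix). Expanding `‖e - u‖_P²`, both cross terms and `‖u‖_P²` equal
`gᵀ P_{ππ}⁻¹ g = β_π(x)`.
-/

open Matrix

namespace Matrix

variable {m n R : Type*} [Fintype m] [Fintype n] [CommRing R]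

omit [Fintype m] in
theorem submatrix_id_mulVec {l : Type*} (M : Matrix m n R) (e : l → m) (v : n → R) :
    M.submatrix e id *ᵥ v = (M *ᵥ v) ∘ e :=
  rfl

theorem dotProduct_mulVec_sub_projection [DecidableEq m] {P : Matrix n n R} (hP : Pᵀ = P)
    (F : Matrix m n R) (hM : IsUnit (F * P * Fᵀ).det) (e : n → R) :
    let g := F *ᵥ (P *ᵥ e)
    let u := Fᵀ *ᵥ ((F * P * Fᵀ)⁻¹ *ᵥ g)
    (e - u) ⬝ᵥ (P *ᵥ (e - u)) = e ⬝ᵥ (P *ᵥ e) - g ⬝ᵥ ((F * P * Fᵀ)⁻¹ *ᵥ g) := by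
  intro g u
  set w := (F * P * Fᵀ)⁻¹ *ᵥ g
  have hu : ∀ v, u ⬝ᵥ (P *ᵥ v) = w ⬝ᵥ (F *ᵥ (P *ᵥ v)) := fun v => by
    rw [dotProduct_comm, dotProduct_transpose_mulVec]
  have huPe : u ⬝ᵥ (P *ᵥ e) = w ⬝ᵥ g := hu e
  have hePu : e ⬝ᵥ (P *ᵥ u) = w ⬝ᵥ g := by
    rw [← hP, dotProduct_transpose_mulVec, huPe]
  have huPu : u ⬝ᵥ (P *ᵥ u) = w ⬝ᵥ g := by
    rw [hu, mulVec_mulVec, mulVec_mulVec, mulVec_mulVec, mul_nonsing_inv _ hM, one_mulVec]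
  calc (e - u) ⬝ᵥ (P *ᵥ (e - u))
      = e ⬝ᵥ (P *ᵥ e) - e ⬝ᵥ (P *ᵥ u) - u ⬝ᵥ (P *ᵥ e) + u ⬝ᵥ (P *ᵥ u) := by
        simp only [mulVec_sub, sub_dotProduct, dotProduct_sub]; ring
    _ = e ⬝ᵥ (P *ᵥ e) - g ⬝ᵥ w := by rw [hePu, huPe, huPu, dotProduct_comm w g]; ring

end Matrix

/-- For the BCD update `x' = x + 𝕀_πᵀ (P_{ππ})⁻¹ (q_π - P_π x)` one has
`‖x' - x_opt‖_P² = ‖x - x_opt‖_P² - β_π(x)` where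
`β_π(x) = (P_π x - q_π)ᵀ (P_{ππ})⁻¹ (P_π x - q_π)`. -/
theorem stmt_3 {n : ℕ} (P : Matrix (Fin n) (Fin n) ℝ) (hP : P.PosDef)
    (q : Fin n → ℝ) (π : Finset (Fin n)) (x xopt : Fin n → ℝ)
    (hxopt : xopt = P⁻¹ *ᵥ q)
    (Pπ : Matrix {a // a ∈ π} (Fin n) ℝ)
    (hPπ : Pπ = P.submatrix (fun a : {a // a ∈ π} => (a : Fin n)) id)
    (Iπ : Matrix {a // a ∈ π} (Fin n) ℝ)
    (hIπ : Iπ = (1 : Matrix (Fin n) (Fin n) ℝ).submatrix (fun a : {a // a ∈ π} => (a : Fin n)) id)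
    (Pππ : Matrix {a // a ∈ π} {a // a ∈ π} ℝ) (hPππ : Pππ = Pπ * Iπᵀ)
    (qπ : {a // a ∈ π} → ℝ) (hqπ : qπ = fun a => q a.1)
    (x' : Fin n → ℝ)
    (hx' : x' = x + Iπᵀ *ᵥ (Pππ⁻¹ *ᵥ (qπ - Pπ *ᵥ x))) :
    (x' - xopt) ⬝ᵥ (P *ᵥ (x' - xopt)) =
      (x - xopt) ⬝ᵥ (P *ᵥ (x - xopt))
        - (Pπ *ᵥ x - qπ) ⬝ᵥ (Pππ⁻¹ *ᵥ (Pπ *ᵥ x - qπ)) := by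
  have hPπ_eq : Pπ = Iπ * P := by
    rw [hPπ, hIπ]; exact (one_submatrix_mul _ (Equiv.refl _) P).symm
  have hPππ_eq : Pππ = Iπ * P * Iπᵀ := by rw [hPππ, hPπ_eq]
  have hPππ_pd : Pππ.PosDef := by
    have : Pππ = P.submatrix Subtype.val Subtype.val := by
      rw [hPππ, hPπ, hIπ, transpose_submatrix, transpose_one]
      exact mul_submatrix_one (Equiv.refl _) _ _
    exact this ▸ hP.submatrix Subtype.val_injective
  have hq : P *ᵥ xopt = q := by
    rw [hxopt, mulVec_mulVec, mul_nonsing_inv _ ((isUnit_iff_isUnit_det _).mp hP.isUnit),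
      one_mulVec]
  have hqπ_eq : qπ = Iπ *ᵥ q := by
    rw [hqπ, hIπ, submatrix_id_mulVec, one_mulVec]
    rfl
  have hgrad : Pπ *ᵥ x - qπ = Iπ *ᵥ (P *ᵥ (x - xopt)) := by
    rw [hqπ_eq, ← hq, hPπ_eq, ← mulVec_mulVec, ← mulVec_sub, ← mulVec_sub]
  have hstep : x' - xopt = (x - xopt) - Iπᵀ *ᵥ (Pππ⁻¹ *ᵥ (Pπ *ᵥ x - qπ)) := by
    rw [hx', ← neg_sub (Pπ *ᵥ x), mulVec_neg, mulVec_neg]; abel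
  have hdet : IsUnit Pππ.det := (isUnit_iff_isUnit_det _).mp hPππ_pd.isUnit
  rw [hstep, hgrad]
  rw [hPππ_eq] at hdet ⊢
  exact dotProduct_mulVec_sub_projection (isHermitian_iff_isSymm.mp hP.isHermitian).eq Iπ hdet
    (x - xopt)
end

section
/- The block coordinate descent update never increases the P-distance to the optimum: for x' = x + 𝕀_πᵀ (P_{ππ})⁻¹ (q_π - P_π x) and x_opt = P⁻¹q, one has ‖x' - x_opt‖_P ≤ ‖x - x_opt‖_P. -/
/-!
Write `e = x - x_opt` and `A = 𝕀_π P 𝕀_πᵀ = P_ππ`. Since `q = P x_opt`, the step is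
`x' - x_opt = e - w` with `w = 𝕀_πᵀ A⁻¹ 𝕀_π P e`, the `P`-orthogonal projection of `e` onto the
range of `𝕀_πᵀ`. Hence `‖e - w‖_P² = ‖e‖_P² - ‖w‖_P² ≤ ‖e‖_P²`.
-/

open Matrix

namespace Matrix

variable {ι κ α : Type*} [Fintype ι]

lemma one_submatrix_id_mul [DecidableEq ι] [NonAssocSemiring α] (f : κ → ι)
    (M : Matrix ι ι α) : (1 : Matrix ι ι α).submatrix f id * M = M.submatrix f id :=
  one_submatrix_mul f (Equiv.refl ι) M

lemma one_submatrix_id_mulVec [DecidableEq ι] [NonAssocSemiring α] (f : κ → ι) (v : ι → α) :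
    (1 : Matrix ι ι α).submatrix f id *ᵥ v = v ∘ f := by
  rw [← Equiv.coe_refl, submatrix_mulVec_equiv, one_mulVec]
  rfl

lemma IsSymm.dotProduct_mulVec_comm [CommSemiring α] {P : Matrix ι ι α} (hP : P.IsSymm)
    (y z : ι → α) : y ⬝ᵥ (P *ᵥ z) = z ⬝ᵥ (P *ᵥ y) := by
  rw [dotProduct_mulVec, ← mulVec_transpose, hP.eq, dotProduct_comm]

variable [Fintype κ] [DecidableEq κ]

/-- The `P`-orthogonal projection of `e` onto the range of `Sᵀ`, when `S P Sᵀ` is invertible. -/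
noncomputable def blockProj [CommRing α] (P : Matrix ι ι α) (S : Matrix κ ι α) (e : ι → α) :
    ι → α :=
  Sᵀ *ᵥ ((S * P * Sᵀ)⁻¹ *ᵥ ((S * P) *ᵥ e))

lemma blockProj_quadForm [CommRing α] {P : Matrix ι ι α} (S : Matrix κ ι α) (e : ι → α) :
    blockProj P S e ⬝ᵥ (P *ᵥ blockProj P S e) = blockProj P S e ⬝ᵥ (P *ᵥ e) := by
  have hmove : ∀ u y, (Sᵀ *ᵥ u) ⬝ᵥ (P *ᵥ y) = u ⬝ᵥ ((S * P) *ᵥ y) := fun u y => by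
    rw [mulVec_transpose, ← dotProduct_mulVec, mulVec_mulVec]
  unfold blockProj
  generalize hu : (S * P * Sᵀ)⁻¹ *ᵥ ((S * P) *ᵥ e) = u
  rw [hmove, hmove, mulVec_mulVec]
  -- a singular `S P Sᵀ` has inverse `0` in Mathlib, so then `u = 0` and both sides vanish
  rcases (S * P * Sᵀ).nonsing_inv_cancel_or_zero with ⟨-, hinv⟩ | hinv
  · congr 1
    rw [← hu, mulVec_mulVec _ (S * P * Sᵀ), hinv, one_mulVec]
  · simp [← hu, hinv]

theorem quadForm_sub_blockProj [CommRing α] {P : Matrix ι ι α} (hP : P.IsSymm)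
    (S : Matrix κ ι α) (e : ι → α) :
    (e - blockProj P S e) ⬝ᵥ (P *ᵥ (e - blockProj P S e)) =
      e ⬝ᵥ (P *ᵥ e) - blockProj P S e ⬝ᵥ (P *ᵥ blockProj P S e) := by
  have hcross := hP.dotProduct_mulVec_comm e (blockProj P S e)
  have hquad := blockProj_quadForm (P := P) S e
  simp only [mulVec_sub, sub_dotProduct, dotProduct_sub]
  linear_combination 2 * hquad - hcross

theorem quadForm_sub_blockProj_le {P : Matrix ι ι ℝ} (hP : P.PosSemidef) (S : Matrix κ ι ℝ)
    (e : ι → ℝ) :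
    (e - blockProj P S e) ⬝ᵥ (P *ᵥ (e - blockProj P S e)) ≤ e ⬝ᵥ (P *ᵥ e) := by
  rw [quadForm_sub_blockProj (isHermitian_iff_isSymm.mp hP.isHermitian)]
  have := hP.dotProduct_mulVec_nonneg (blockProj P S e)
  rw [star_trivial] at this
  linarith

end Matrix

/-- The BCD update never increases the `P`-distance to the optimum:
`‖x' - x_opt‖_P ≤ ‖x - x_opt‖_P`. -/
theorem stmt_5 {n : ℕ} (P : Matrix (Fin n) (Fin n) ℝ) (hP : P.PosDef)
    (q : Fin n → ℝ) (π : Finset (Fin n)) (x xopt : Fin n → ℝ)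
    (hxopt : xopt = P⁻¹ *ᵥ q)
    (Pπ : Matrix {a // a ∈ π} (Fin n) ℝ)
    (hPπ : Pπ = P.submatrix (fun a : {a // a ∈ π} => (a : Fin n)) id)
    (Iπ : Matrix {a // a ∈ π} (Fin n) ℝ)
    (hIπ : Iπ = (1 : Matrix (Fin n) (Fin n) ℝ).submatrix (fun a : {a // a ∈ π} => (a : Fin n)) id)
    (Pππ : Matrix {a // a ∈ π} {a // a ∈ π} ℝ) (hPππ : Pππ = Pπ * Iπᵀ)
    (qπ : {a // a ∈ π} → ℝ) (hqπ : qπ = fun a => q a.1)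
    (x' : Fin n → ℝ)
    (hx' : x' = x + Iπᵀ *ᵥ (Pππ⁻¹ *ᵥ (qπ - Pπ *ᵥ x))) :
    Real.sqrt ((x' - xopt) ⬝ᵥ (P *ᵥ (x' - xopt))) ≤
      Real.sqrt ((x - xopt) ⬝ᵥ (P *ᵥ (x - xopt))) := by
  have hq : q = P *ᵥ xopt := by
    rw [hxopt, mulVec_mulVec, mul_nonsing_inv P hP.det_pos.ne'.isUnit, one_mulVec]
  have hPπ' : Pπ = Iπ * P := by rw [hPπ, hIπ, one_submatrix_id_mul]
  have hqπ' : qπ = Pπ *ᵥ xopt := by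
    rw [hqπ, hPπ', ← mulVec_mulVec, ← hq, hIπ, one_submatrix_id_mulVec]
    rfl
  have hstep : x' - xopt = (x - xopt) - blockProj P Iπ (x - xopt) := by
    rw [hx', hqπ', ← mulVec_sub, ← neg_sub x xopt, mulVec_neg, mulVec_neg, mulVec_neg, hPππ, hPπ',
      blockProj]
    abel
  rw [hstep]
  exact Real.sqrt_le_sqrt (quadForm_sub_blockProj_le hP.posSemidef Iπ (x - xopt))
end

section
/- Let P be symmetric positive definite with partition Π = {π₁,…,π_m} of {1,…,n}. For x ≠ x_opt = P⁻¹q, let π be a block maximizing β_π(x) = ∇_π f(x)ᵀ (P_{ππ})⁻¹ ∇_π f(x), and x' = x + 𝕀_πᵀ (P_{ππ})⁻¹ (q_π - P_π x) the greedy BCD update. Then ‖x' - x_opt‖_P² / ‖x - x_opt‖_P² ≤ 1 - (1/m) λ_min(P_Π B_Π⁻¹), where P_Π is the symmetric rearrangement of P induced by Π and B_Π is the block diagonal matrix of the blocks P_{π_i π_i}. -/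
/-!
Write `e = x - x_opt`, so that the gradient is `P e`. Minimizing exactly over the block `π`
lowers `‖e‖_P²` by exactly `β_π(x)`. Summing over all blocks, `∑ β_π(x) = gᵀ B_Π⁻¹ g` with
`g = P_Π E` and `E` the rearrangement of `e`; writing `P_Π = T²` with `T` symmetric, the matrix
`P_Π B_Π⁻¹ = T (T B_Π⁻¹)` has the spectrum of the symmetric matrix `T B_Π⁻¹ T`, and the Rayleigh
bound for the latter at `T E` gives `∑ β_π(x) ≥ λ_min ‖e‖_P²`. The greedy block has at least the
average value `(1/m) ∑ β_π(x)`.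
-/

open Matrix

namespace Matrix

theorem spectrum_mul_comm {K n : Type*} [Field K] [Fintype n] [DecidableEq n]
    (A B : Matrix n n K) : spectrum K (A * B) = spectrum K (B * A) := by
  ext r
  simp only [mem_spectrum_iff_isRoot_charpoly, charpoly_mul_comm]

open scoped MatrixOrder in
theorem IsHermitian.mul_dotProduct_self_le {n : Type*} [Fintype n] [DecidableEq n]
    {D : Matrix n n ℝ} (hD : D.IsHermitian) {μ : ℝ} (hμ : ∀ ν ∈ spectrum ℝ D, μ ≤ ν)
    (u : n → ℝ) : μ * (u ⬝ᵥ u) ≤ u ⬝ᵥ (D *ᵥ u) := by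
  have hpsd : (D - μ • 1).PosSemidef := by
    rw [← nonneg_iff_posSemidef, sub_nonneg, ← Algebra.algebraMap_eq_smul_one]
    exact (algebraMap_le_iff_le_spectrum hD.isSelfAdjoint).2 hμ
  simpa only [star_trivial, sub_mulVec, smul_mulVec, one_mulVec, dotProduct_sub,
    dotProduct_smul, smul_eq_mul, sub_nonneg] using hpsd.dotProduct_mulVec_nonneg u

open scoped MatrixOrder in
theorem PosSemidef.mul_dotProduct_mulVec_le {n : Type*} [Fintype n] [DecidableEq n]
    {P B : Matrix n n ℝ} (hP : P.PosSemidef) (hB : B.IsHermitian) {μ : ℝ}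
    (hμ : ∀ ν ∈ spectrum ℝ (P * B⁻¹), μ ≤ ν) (w : n → ℝ) :
    μ * (w ⬝ᵥ (P *ᵥ w)) ≤ (P *ᵥ w) ⬝ᵥ (B⁻¹ *ᵥ (P *ᵥ w)) := by
  obtain ⟨T, hT, rfl⟩ : ∃ T : Matrix n n ℝ, T.IsHermitian ∧ P = T * T :=
    ⟨CFC.sqrt P, (CFC.sqrt_nonneg P).posSemidef.1,
      (CFC.sqrt_mul_sqrt_self P hP.nonneg).symm⟩
  have hTt : Tᵀ = T := by simpa using hT.eq
  have hD : ∀ ν ∈ spectrum ℝ (T * B⁻¹ * T), μ ≤ ν := by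
    rwa [spectrum_mul_comm, ← mul_assoc]
  have hDherm : (T * B⁻¹ * T).IsHermitian := by
    simpa only [hT.eq] using isHermitian_conjTranspose_mul_mul T hB.inv
  have hsymm : ∀ u v, u ⬝ᵥ (T *ᵥ v) = (T *ᵥ u) ⬝ᵥ v := fun u v => by
    rw [dotProduct_mulVec, ← mulVec_transpose, hTt]
  have hquad : (T *ᵥ w) ⬝ᵥ (T *ᵥ w) = w ⬝ᵥ ((T * T) *ᵥ w) := by
    rw [← mulVec_mulVec, hsymm, dotProduct_comm]
  have hquadD : (T *ᵥ w) ⬝ᵥ ((T * B⁻¹ * T) *ᵥ (T *ᵥ w)) =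
      ((T * T) *ᵥ w) ⬝ᵥ (B⁻¹ *ᵥ ((T * T) *ᵥ w)) := by
    simp only [← mulVec_mulVec, hsymm]
  simpa only [hquad, hquadD] using hDherm.mul_dotProduct_self_le hD (T *ᵥ w)

end Matrix

noncomputable section BlockUpdate

variable {R ι κ : Type*} [CommRing R] [Fintype ι]

/-- The block `s` of the gradient of `f x = ½ xᵀ P x - qᵀ x`. -/
def blockGrad (P : Matrix ι ι R) (q : ι → R) (s : κ → ι) (x : ι → R) : κ → R :=
  P.submatrix s id *ᵥ x - fun a => q (s a)

/-- Exact minimization of `f x = ½ xᵀ P x - qᵀ x` over the coordinates in the block `s`. -/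
def blockUpdate [DecidableEq ι] [Fintype κ] [DecidableEq κ] (P : Matrix ι ι R) (q : ι → R)
    (s : κ → ι) (x : ι → R) : ι → R :=
  x + ((1 : Matrix ι ι R).submatrix s id)ᵀ *ᵥ
    ((P.submatrix s s)⁻¹ *ᵥ ((fun a => q (s a)) - P.submatrix s id *ᵥ x))

theorem Matrix.one_submatrix_mulVec [DecidableEq ι] (s : κ → ι) (v : ι → R) :
    (1 : Matrix ι ι R).submatrix s id *ᵥ v = fun a => v (s a) := by
  ext a
  simp [mulVec, dotProduct, one_apply]

theorem Matrix.one_submatrix_mul_mul_transpose [DecidableEq ι] (P : Matrix ι ι R) (s : κ → ι) :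
    (1 : Matrix ι ι R).submatrix s id * P * ((1 : Matrix ι ι R).submatrix s id)ᵀ =
      P.submatrix s s := by
  ext a b
  simp [mul_apply, one_apply]

theorem blockGrad_eq_of_mulVec_eq {P : Matrix ι ι R} {q xopt : ι → R} (hq : P *ᵥ xopt = q)
    (s : κ → ι) (x : ι → R) : blockGrad P q s x = fun a => (P *ᵥ (x - xopt)) (s a) := by
  ext a
  simp only [blockGrad, mulVec_sub, hq, Pi.sub_apply]
  rfl

theorem Matrix.IsSymm.blockUpdate_sub_dotProduct [DecidableEq ι] [Fintype κ] [DecidableEq κ]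
    {P : Matrix ι ι R} (hP : P.IsSymm) {s : κ → ι} (hA : IsUnit (P.submatrix s s).det)
    {q xopt : ι → R} (hq : P *ᵥ xopt = q) (x : ι → R) :
    (blockUpdate P q s x - xopt) ⬝ᵥ (P *ᵥ (blockUpdate P q s x - xopt)) =
      (x - xopt) ⬝ᵥ (P *ᵥ (x - xopt)) -
        blockGrad P q s x ⬝ᵥ ((P.submatrix s s)⁻¹ *ᵥ blockGrad P q s x) := by
  set J := (1 : Matrix ι ι R).submatrix s id
  set r := blockGrad P q s x
  set w := (P.submatrix s s)⁻¹ *ᵥ r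
  have hupdate : blockUpdate P q s x - xopt = (x - xopt) - Jᵀ *ᵥ w := by
    rw [blockUpdate, ← neg_sub (P.submatrix s id *ᵥ x), mulVec_neg, mulVec_neg]
    simp only [J, w, r, blockGrad]
    abel
  rw [hupdate]
  set e := x - xopt
  have hr : J *ᵥ (P *ᵥ e) = r := by
    rw [one_submatrix_mulVec]
    exact (blockGrad_eq_of_mulVec_eq hq s x).symm
  have hAw : P.submatrix s s *ᵥ w = r := by
    rw [mulVec_mulVec, mul_nonsing_inv _ hA, one_mulVec]
  have hJ : ∀ v, (Jᵀ *ᵥ w) ⬝ᵥ v = w ⬝ᵥ (J *ᵥ v) := fun v => by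
    rw [dotProduct_comm, dotProduct_transpose_mulVec]
  have hPsymm : ∀ u v, u ⬝ᵥ (P *ᵥ v) = v ⬝ᵥ (P *ᵥ u) := fun u v => by
    simpa only [hP.eq] using dotProduct_transpose_mulVec P u v
  have hcross : (Jᵀ *ᵥ w) ⬝ᵥ (P *ᵥ e) = w ⬝ᵥ r := by rw [hJ, hr]
  have hsq : (Jᵀ *ᵥ w) ⬝ᵥ (P *ᵥ (Jᵀ *ᵥ w)) = w ⬝ᵥ r := by
    rw [hJ, mulVec_mulVec, mulVec_mulVec, one_submatrix_mul_mul_transpose, hAw]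
  clear_value e w
  rw [mulVec_sub, dotProduct_sub, sub_dotProduct, sub_dotProduct, hPsymm e (Jᵀ *ᵥ w), hcross,
    hsq, dotProduct_comm w]
  ring

end BlockUpdate

section BlockDiagonal

variable {R o : Type*} {m' : o → Type*} [Fintype o] [DecidableEq o] [∀ i, Fintype (m' i)]

theorem Matrix.inv_blockDiagonal' [CommRing R] [∀ i, DecidableEq (m' i)]
    (M : ∀ i, Matrix (m' i) (m' i) R) (hM : ∀ i, IsUnit (M i).det) :
    (blockDiagonal' M)⁻¹ = blockDiagonal' fun i => (M i)⁻¹ := by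
  refine inv_eq_right_inv ?_
  rw [← blockDiagonal'_mul]
  simp only [mul_nonsing_inv _ (hM _)]
  exact blockDiagonal'_one

theorem Matrix.blockDiagonal'_mulVec_apply [NonUnitalNonAssocSemiring R]
    (M : ∀ i, Matrix (m' i) (m' i) R) (w : (Σ i, m' i) → R) (i : o) (a : m' i) :
    (blockDiagonal' M *ᵥ w) ⟨i, a⟩ = (M i *ᵥ fun b => w ⟨i, b⟩) a := by
  simp only [mulVec, dotProduct, Fintype.sum_sigma]
  rw [Fintype.sum_eq_single i fun j hj => by simp [blockDiagonal'_apply_ne _ _ _ (Ne.symm hj)]]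
  simp

theorem Matrix.dotProduct_blockDiagonal'_mulVec [NonUnitalNonAssocSemiring R]
    (M : ∀ i, Matrix (m' i) (m' i) R) (v w : (Σ i, m' i) → R) :
    v ⬝ᵥ (blockDiagonal' M *ᵥ w) =
      ∑ i, (fun a => v ⟨i, a⟩) ⬝ᵥ (M i *ᵥ fun b => w ⟨i, b⟩) := by
  simp only [dotProduct, Fintype.sum_sigma, blockDiagonal'_mulVec_apply]

end BlockDiagonal

theorem Matrix.blockDiagonal'_submatrix_apply {R ι α : Type*} {κ : ι → Type*} [DecidableEq ι]
    [Zero R] (P : Matrix α α R) (s : ∀ i, κ i → α) (p p' : Σ i, κ i) :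
    blockDiagonal' (fun i => P.submatrix (s i) (s i)) p p' =
      if p.1 = p'.1 then P (s p.1 p.2) (s p'.1 p'.2) else 0 := by
  obtain ⟨i, a⟩ := p
  obtain ⟨j, b⟩ := p'
  obtain rfl | hij := eq_or_ne i j
  · simp
  · simp [hij, blockDiagonal'_apply_ne _ _ _ hij]

theorem Finset.bijective_sigma_val {ι α : Type*} (π : ι → Finset α)
    (hdisj : ∀ i j, i ≠ j → Disjoint (π i) (π j)) (hcover : ∀ a, ∃ i, a ∈ π i) :
    Function.Bijective fun p : Σ i, {a // a ∈ π i} => (p.2 : α) := by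
  refine ⟨?_, fun a => (hcover a).elim fun i hi => ⟨⟨i, a, hi⟩, rfl⟩⟩
  rintro ⟨i, a, ha⟩ ⟨j, b, hb⟩ (rfl : a = b)
  obtain rfl : i = j := by_contra fun hij => Finset.disjoint_left.mp (hdisj i j hij) ha hb
  rfl

theorem Matrix.PosDef.mul_dotProduct_le_sum_blockGrad {ι α : Type*} {κ : ι → Type*}
    [Fintype ι] [DecidableEq ι] [∀ i, Fintype (κ i)] [∀ i, DecidableEq (κ i)] [Fintype α]
    [DecidableEq α] {P : Matrix α α ℝ} (hP : P.PosDef) {q xopt : α → ℝ} (hq : P *ᵥ xopt = q)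
    (s : ∀ i, κ i → α) (hs : Function.Bijective fun p : Σ i, κ i => s p.1 p.2) {μ : ℝ}
    (hμ : ∀ ν ∈ spectrum ℝ (P.submatrix (fun p => s p.1 p.2) (fun p => s p.1 p.2) *
      (blockDiagonal' fun i => P.submatrix (s i) (s i))⁻¹), μ ≤ ν) (x : α → ℝ) :
    μ * ((x - xopt) ⬝ᵥ (P *ᵥ (x - xopt))) ≤
      ∑ i, blockGrad P q (s i) x ⬝ᵥ ((P.submatrix (s i) (s i))⁻¹ *ᵥ blockGrad P q (s i) x) := by
  set σ := Equiv.ofBijective _ hs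
  have hblock : ∀ i, (P.submatrix (s i) (s i)).PosDef := fun i =>
    hP.submatrix fun a b hab => by simpa using hs.1 (a₁ := ⟨i, a⟩) (a₂ := ⟨i, b⟩) hab
  have hB : (blockDiagonal' fun i => P.submatrix (s i) (s i)).IsHermitian :=
    isHermitian_blockDiagonal'_iff.2 fun i => (hblock i).isHermitian
  have key := (hP.posSemidef.submatrix σ).mul_dotProduct_mulVec_le hB hμ ((x - xopt) ∘ σ)
  rw [submatrix_mulVec_equiv, Function.comp_assoc, Equiv.self_comp_symm, Function.comp_id,
    comp_equiv_dotProduct_comp_equiv,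
    inv_blockDiagonal' _ fun i => (isUnit_iff_isUnit_det _).1 (hblock i).isUnit,
    dotProduct_blockDiagonal'_mulVec] at key
  simp only [blockGrad_eq_of_mulVec_eq hq]
  exact key

theorem stmt_9_general {n m : ℕ}
    (P : Matrix (Fin n) (Fin n) ℝ) (hP : P.PosDef) (q : Fin n → ℝ)
    (π : Fin m → Finset (Fin n))
    (hdisj : ∀ i j, i ≠ j → Disjoint (π i) (π j))
    (hcover : ∀ a : Fin n, ∃ i, a ∈ π i)
    (PPi BPi : Matrix (Σ i : Fin m, {a // a ∈ π i}) (Σ i : Fin m, {a // a ∈ π i}) ℝ)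
    (hPPi : ∀ p p', PPi p p' = P p.2 p'.2)
    (hBPi : ∀ p p', BPi p p' = if p.1 = p'.1 then P p.2 p'.2 else 0)
    (μ : ℝ)
    (hμmin : ∀ ν ∈ spectrum ℝ (PPi * BPi⁻¹), μ ≤ ν)
    (x xopt : Fin n → ℝ) (hxopt : xopt = P⁻¹ *ᵥ q) (hx : x ≠ xopt)
    (β : Fin m → ℝ)
    (hβ : ∀ i, β i =
      (P.submatrix (fun a : {a // a ∈ π i} => (a : Fin n)) id *ᵥ x - fun a : {a // a ∈ π i} => q a.1)
        ⬝ᵥ ((P.submatrix (fun a : {a // a ∈ π i} => (a : Fin n)) (fun a : {a // a ∈ π i} => (a : Fin n)))⁻¹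
          *ᵥ (P.submatrix (fun a : {a // a ∈ π i} => (a : Fin n)) id *ᵥ x - fun a : {a // a ∈ π i} => q a.1)))
    (i0 : Fin m) (hi0 : ∀ i, β i ≤ β i0)
    (x' : Fin n → ℝ)
    (hx' : x' = x +
      ((1 : Matrix (Fin n) (Fin n) ℝ).submatrix (fun a : {a // a ∈ π i0} => (a : Fin n)) id)ᵀ *ᵥ
        ((P.submatrix (fun a : {a // a ∈ π i0} => (a : Fin n)) (fun a : {a // a ∈ π i0} => (a : Fin n)))⁻¹ *ᵥ
          ((fun a : {a // a ∈ π i0} => q a.1) -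
            P.submatrix (fun a : {a // a ∈ π i0} => (a : Fin n)) id *ᵥ x))) :
    ((x' - xopt) ⬝ᵥ (P *ᵥ (x' - xopt))) / ((x - xopt) ⬝ᵥ (P *ᵥ (x - xopt))) ≤
      1 - μ / m := by
  have hq : P *ᵥ xopt = q := by
    rw [hxopt, mulVec_mulVec, mul_nonsing_inv _ ((isUnit_iff_isUnit_det _).1 hP.isUnit),
      one_mulVec]
  have hdecrease : (x' - xopt) ⬝ᵥ (P *ᵥ (x' - xopt)) =
      (x - xopt) ⬝ᵥ (P *ᵥ (x - xopt)) - β i0 := by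
    rw [hx', hβ]
    exact (isHermitian_iff_isSymm.1 hP.isHermitian).blockUpdate_sub_dotProduct
      ((isUnit_iff_isUnit_det _).1 (hP.submatrix Subtype.val_injective).isUnit) hq x
  have hspectral : μ * ((x - xopt) ⬝ᵥ (P *ᵥ (x - xopt))) ≤ ∑ i, β i := by
    have hPPi' : PPi = P.submatrix (fun p => p.2) (fun p => p.2) := ext hPPi
    have hBPi' : BPi = blockDiagonal' fun i => P.submatrix
        (fun a : {a // a ∈ π i} => (a : Fin n)) (fun a : {a // a ∈ π i} => (a : Fin n)) :=
      ext fun p p' => by rw [hBPi, blockDiagonal'_submatrix_apply]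
    rw [hPPi', hBPi'] at hμmin
    exact (hP.mul_dotProduct_le_sum_blockGrad hq (fun i (a : {a // a ∈ π i}) => (a : Fin n))
      (Finset.bijective_sigma_val π hdisj hcover) hμmin x).trans_eq
        (Finset.sum_congr rfl fun i _ => (hβ i).symm)
  have hgreedy : ∑ i, β i ≤ m * β i0 := by
    simpa using Finset.sum_le_card_nsmul Finset.univ β (β i0) fun i _ => hi0 i
  have hD : 0 < (x - xopt) ⬝ᵥ (P *ᵥ (x - xopt)) := by
    simpa using hP.dotProduct_mulVec_pos (sub_ne_zero.2 hx)
  have hm : (0 : ℝ) < m := Nat.cast_pos.2 i0.pos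
  rw [div_le_iff₀ hD, hdecrease, sub_mul, one_mul, div_mul_eq_mul_div, sub_le_sub_iff_left,
    div_le_iff₀ hm]
  linarith

/-- Convergence rate of the greedy BCD step:
`‖x' - x_opt‖_P² / ‖x - x_opt‖_P² ≤ 1 - (1/m) λ_min(P_Π B_Π⁻¹)`. -/
theorem stmt_9 {n m : ℕ} (hm : 0 < m)
    (P : Matrix (Fin n) (Fin n) ℝ) (hP : P.PosDef) (q : Fin n → ℝ)
    (π : Fin m → Finset (Fin n))
    (hdisj : ∀ i j, i ≠ j → Disjoint (π i) (π j))
    (hcover : ∀ a : Fin n, ∃ i, a ∈ π i)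
    (PPi BPi : Matrix (Σ i : Fin m, {a // a ∈ π i}) (Σ i : Fin m, {a // a ∈ π i}) ℝ)
    (hPPi : ∀ p p', PPi p p' = P p.2 p'.2)
    (hBPi : ∀ p p', BPi p p' = if p.1 = p'.1 then P p.2 p'.2 else 0)
    (μ : ℝ) (hμ : μ ∈ spectrum ℝ (PPi * BPi⁻¹))
    (hμmin : ∀ ν ∈ spectrum ℝ (PPi * BPi⁻¹), μ ≤ ν)
    (x xopt : Fin n → ℝ) (hxopt : xopt = P⁻¹ *ᵥ q) (hx : x ≠ xopt)
    (β : Fin m → ℝ)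
    (hβ : ∀ i, β i =
      (P.submatrix (fun a : {a // a ∈ π i} => (a : Fin n)) id *ᵥ x - fun a : {a // a ∈ π i} => q a.1)
        ⬝ᵥ ((P.submatrix (fun a : {a // a ∈ π i} => (a : Fin n)) (fun a : {a // a ∈ π i} => (a : Fin n)))⁻¹
          *ᵥ (P.submatrix (fun a : {a // a ∈ π i} => (a : Fin n)) id *ᵥ x - fun a : {a // a ∈ π i} => q a.1)))
    (i0 : Fin m) (hi0 : ∀ i, β i ≤ β i0)
    (x' : Fin n → ℝ)
    (hx' : x' = x +
      ((1 : Matrix (Fin n) (Fin n) ℝ).submatrix (fun a : {a // a ∈ π i0} => (a : Fin n)) id)ᵀ *ᵥ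
        ((P.submatrix (fun a : {a // a ∈ π i0} => (a : Fin n)) (fun a : {a // a ∈ π i0} => (a : Fin n)))⁻¹ *ᵥ
          ((fun a : {a // a ∈ π i0} => q a.1) -
            P.submatrix (fun a : {a // a ∈ π i0} => (a : Fin n)) id *ᵥ x))) :
    ((x' - xopt) ⬝ᵥ (P *ᵥ (x' - xopt))) / ((x - xopt) ⬝ᵥ (P *ᵥ (x - xopt))) ≤
      1 - μ / m :=
  stmt_9_general P hP q π hdisj hcover PPi BPi hPPi hBPi μ hμmin x xopt hxopt hx β hβ i0 hi0 x' hx'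
end
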